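/- The q-Chebyshev polynomials u_n(x,q) of the second kind, defined by u_0=1, u_1=x and u_n(x,q) = x u_{n-1}(x,q) - (q^{n-1}/((1+q^{n-1})(1+q^n))) u_{n-2}(x,q), satisfy u_n(x,q) = Σ_{k=0}^{⌊n/2⌋} [n-k choose k]_q q^{k^2} (-1)^k x^{n-2k} / ((-q;q)_k (-q^{n+1-k};q)_k). -/

import Mathlib

/-- The q-Pochhammer symbol `(a;q)_n`. -/
noncomputable def qPoch (a q : ℝ) (n : ℕ) : ℝ := ∏ j ∈ Finset.range n, (1 - q ^ j * a)

/-- The Gaussian (q-)binomial coefficient `[n choose k]_q`. -/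
noncomputable def qbinom (q : ℝ) (n k : ℕ) : ℝ :=
  qPoch q q n / (qPoch q q k * qPoch q q (n - k))

/-!
Write `u_n(x) = ∑_{k+m=n} c_{k,m} x^(m-k)`. The recurrence for `u_n` then holds
coefficientwise, `c_{k+1,m+1} = c_{k+1,m} - λ_{k+m+1} c_{k,m}` with
`λ_j = q^j / ((1+q^j)(1+q^(j+1)))`, and once the Pochhammer denominators are cleared this
identity is a combination of the two q-Pascal rules for `[m+1 choose k+1]_q`.
With `[m choose k]_q` extended by zero for `k > m`, the identity holds for all `k, m`,
boundary terms included, so it sums directly to the recurrence of `u_n`.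
-/

open Finset

lemma qPoch_zero (a q : ℝ) : qPoch a q 0 = 1 := prod_range_zero _

lemma qPoch_succ (a q : ℝ) (n : ℕ) : qPoch a q (n + 1) = qPoch a q n * (1 - q ^ n * a) :=
  prod_range_succ _ _

lemma qPoch_succ' (a q : ℝ) (n : ℕ) : qPoch a q (n + 1) = (1 - a) * qPoch (q * a) q n := by
  simp only [qPoch, prod_range_succ', pow_zero, mul_one, pow_succ, mul_assoc, mul_comm]

lemma qPoch_neg_pow_mul_one_add_pow (q : ℝ) (a k : ℕ) :
    qPoch (-(q ^ a)) q k * (1 + q ^ (k + a)) = (1 + q ^ a) * qPoch (-(q ^ (a + 1))) q k := by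
  have h := qPoch_succ' (-(q ^ a)) q k
  rwa [qPoch_succ, mul_neg, mul_neg, ← pow_add, ← pow_succ', sub_neg_eq_add, sub_neg_eq_add]
    at h

lemma qPoch_pos_of_nonpos {a q : ℝ} (hq : 0 ≤ q) (ha : a ≤ 0) (n : ℕ) : 0 < qPoch a q n :=
  prod_pos fun j _ => by nlinarith [mul_nonpos_of_nonneg_of_nonpos (pow_nonneg hq j) ha]

lemma one_sub_pow_succ_ne_zero {q : ℝ} (hq0 : 0 ≤ q) (hq1 : q ≠ 1) (n : ℕ) :
    1 - q ^ (n + 1) ≠ 0 := by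
  rw [sub_ne_zero, ne_comm, Ne, pow_eq_one_iff_of_nonneg hq0 n.succ_ne_zero]
  exact hq1

lemma qPoch_self_ne_zero {q : ℝ} (hq0 : 0 ≤ q) (hq1 : q ≠ 1) (n : ℕ) : qPoch q q n ≠ 0 :=
  prod_ne_zero_iff.2 fun j _ => pow_succ q j ▸ one_sub_pow_succ_ne_zero hq0 hq1 j

lemma qbinom_zero_right {q : ℝ} (hq0 : 0 ≤ q) (hq1 : q ≠ 1) (n : ℕ) : qbinom q n 0 = 1 := by
  rw [qbinom, qPoch_zero, one_mul, Nat.sub_zero, div_self (qPoch_self_ne_zero hq0 hq1 n)]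

lemma qbinom_self {q : ℝ} (hq0 : 0 ≤ q) (hq1 : q ≠ 1) (n : ℕ) : qbinom q n n = 1 := by
  rw [qbinom, Nat.sub_self, qPoch_zero, mul_one, div_self (qPoch_self_ne_zero hq0 hq1 n)]

lemma qbinom_succ_succ {q : ℝ} (hq0 : 0 ≤ q) (hq1 : q ≠ 1) {n k : ℕ} (h : k < n) :
    qbinom q (n + 1) (k + 1) = qbinom q n k + q ^ (k + 1) * qbinom q n (k + 1) ∧
      q ^ k * qbinom q (n + 1) (k + 1) = q ^ n * qbinom q n k + q ^ k * qbinom q n (k + 1) := by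
  obtain ⟨m, rfl⟩ := Nat.exists_eq_add_of_lt h
  have e1 : k + m + 1 + 1 - (k + 1) = m + 1 := by omega
  have e2 : k + m + 1 - k = m + 1 := by omega
  have e3 : k + m + 1 - (k + 1) = m := by omega
  simp only [qbinom, e1, e2, e3, qPoch_succ q q (k + m + 1), qPoch_succ q q k, qPoch_succ q q m,
    ← pow_succ]
  have := one_sub_pow_succ_ne_zero hq0 hq1 k
  have := one_sub_pow_succ_ne_zero hq0 hq1 m
  have := qPoch_self_ne_zero hq0 hq1 k
  have := qPoch_self_ne_zero hq0 hq1 m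
  constructor <;> (field_simp; ring)

/-- `qbinom` extended by zero to `n < k`, where `qbinom` takes junk values. -/
noncomputable def qChoose (q : ℝ) (n k : ℕ) : ℝ := if k ≤ n then qbinom q n k else 0

lemma qChoose_of_le {q : ℝ} {n k : ℕ} (h : k ≤ n) : qChoose q n k = qbinom q n k := if_pos h

lemma qChoose_of_lt {q : ℝ} {n k : ℕ} (h : n < k) : qChoose q n k = 0 := if_neg h.not_ge

lemma qChoose_succ_succ {q : ℝ} (hq0 : 0 ≤ q) (hq1 : q ≠ 1) (n k : ℕ) :
    qChoose q (n + 1) (k + 1) = qChoose q n k + q ^ (k + 1) * qChoose q n (k + 1) ∧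
      q ^ k * qChoose q (n + 1) (k + 1) = q ^ n * qChoose q n k + q ^ k * qChoose q n (k + 1) := by
  rcases lt_trichotomy k n with h | rfl | h
  · rw [qChoose_of_le (by omega), qChoose_of_le h.le, qChoose_of_le h]
    exact qbinom_succ_succ hq0 hq1 h
  · simp [qChoose_of_le, qChoose_of_lt, qbinom_self hq0 hq1]
  · simp [qChoose_of_lt, h, h.trans k.lt_succ_self]

/-- The coefficient of `x ^ (m - k)` in `u_(k+m)`. -/
noncomputable def qChebCoeff (q : ℝ) (k m : ℕ) : ℝ :=
  qChoose q m k * q ^ (k ^ 2) * (-1) ^ k / (qPoch (-q) q k * qPoch (-(q ^ (m + 1))) q k)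

lemma qChebCoeff_succ_succ {q : ℝ} (hq0 : 0 ≤ q) (hq1 : q ≠ 1) (k m : ℕ) :
    qChebCoeff q (k + 1) (m + 1) = qChebCoeff q (k + 1) m -
      q ^ (k + m + 1) / ((1 + q ^ (k + m + 1)) * (1 + q ^ (k + m + 2))) * qChebCoeff q k m := by
  obtain ⟨pascal₁, pascal₂⟩ := qChoose_succ_succ hq0 hq1 m k
  have hpascal : q ^ (k + 1) * (1 + q ^ (m + 1)) * qChoose q (m + 1) (k + 1) =
      q ^ (k + 1) * (1 + q ^ (k + m + 2)) * qChoose q m (k + 1) +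
        q ^ (m + 1) * (1 + q ^ (k + 1)) * qChoose q m k := by
    linear_combination q * pascal₂ + q ^ (m + k + 2) * pascal₁
  have hc := (qPoch_pos_of_nonpos hq0 (neg_nonpos.2 hq0) k).ne'
  have hP := (qPoch_pos_of_nonpos hq0 (neg_nonpos.2 (pow_nonneg hq0 (m + 2))) k).ne'
  have hR : qPoch (-(q ^ (m + 1))) q k =
      (1 + q ^ (m + 1)) * qPoch (-(q ^ (m + 2))) q k / (1 + q ^ (k + m + 1)) :=
    eq_div_of_mul_eq (by positivity) (qPoch_neg_pow_mul_one_add_pow q (m + 1) k)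
  simp only [qChebCoeff, qPoch_succ, hR, mul_neg, sub_neg_eq_add, ← pow_succ, ← pow_add]
  field_simp
  linear_combination
    -(q ^ k * q ^ k ^ 2 * (-1) ^ k * (1 + q ^ (k + m + 1)) * (1 + q ^ (k + m + 2))) * hpascal

lemma qChebCoeff_of_lt {q : ℝ} {k m : ℕ} (h : m < k) : qChebCoeff q k m = 0 := by
  rw [qChebCoeff, qChoose_of_lt h, zero_mul, zero_mul, zero_div]

lemma qChebCoeff_zero_left {q : ℝ} (hq0 : 0 ≤ q) (hq1 : q ≠ 1) (m : ℕ) :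
    qChebCoeff q 0 m = 1 := by
  simp [qChebCoeff, qChoose_of_le, qbinom_zero_right hq0 hq1, qPoch_zero]

lemma qChebCoeff_mul_pow_sub (q x : ℝ) (k m : ℕ) :
    qChebCoeff q (k + 1) m * x ^ (m - k) = x * (qChebCoeff q (k + 1) m * x ^ (m - (k + 1))) := by
  rcases lt_or_ge m (k + 1) with h | h
  · simp [qChebCoeff_of_lt h]
  · rw [show m - k = m - (k + 1) + 1 by omega, pow_succ]
    ring

noncomputable def qChebU (q : ℝ) (n : ℕ) (x : ℝ) : ℝ :=
  ∑ p ∈ antidiagonal n, qChebCoeff q p.1 p.2 * x ^ (p.2 - p.1)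

lemma qChebU_zero (q x : ℝ) : qChebU q 0 x = 1 := by
  simp [qChebU, qChebCoeff, qChoose_of_le, qbinom, qPoch_zero]

lemma qChebU_one {q : ℝ} (hq0 : 0 ≤ q) (hq1 : q ≠ 1) (x : ℝ) : qChebU q 1 x = x := by
  simp [qChebU, Nat.sum_antidiagonal_succ, qChebCoeff_zero_left hq0 hq1, qChebCoeff_of_lt]

lemma qChebU_succ_succ {q : ℝ} (hq0 : 0 ≤ q) (hq1 : q ≠ 1) (n : ℕ) (x : ℝ) :
    qChebU q (n + 2) x = x * qChebU q (n + 1) x -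
      q ^ (n + 1) / ((1 + q ^ (n + 1)) * (1 + q ^ (n + 2))) * qChebU q n x := by
  have hstep : ∀ p ∈ antidiagonal n,
      qChebCoeff q (p.1 + 1) (p.2 + 1) * x ^ (p.2 + 1 - (p.1 + 1)) =
        x * (qChebCoeff q (p.1 + 1) p.2 * x ^ (p.2 - (p.1 + 1))) -
          q ^ (n + 1) / ((1 + q ^ (n + 1)) * (1 + q ^ (n + 2))) *
            (qChebCoeff q p.1 p.2 * x ^ (p.2 - p.1)) := by
    rintro ⟨k, m⟩ hkm
    rw [HasAntidiagonal.mem_antidiagonal] at hkm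
    subst hkm
    rw [qChebCoeff_succ_succ hq0 hq1, Nat.add_sub_add_right, ← qChebCoeff_mul_pow_sub]
    ring
  rw [qChebU, Nat.sum_antidiagonal_succ', Nat.sum_antidiagonal_succ, sum_congr rfl hstep,
    sum_sub_distrib, ← mul_sum, ← mul_sum, qChebU, Nat.sum_antidiagonal_succ, qChebU]
  dsimp only
  rw [qChebCoeff_of_lt (by omega), qChebCoeff_zero_left hq0 hq1, qChebCoeff_zero_left hq0 hq1,
    Nat.sub_zero, Nat.sub_zero]
  ring

lemma qChebU_eq_sum_range (q : ℝ) (n : ℕ) (x : ℝ) :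
    qChebU q n x = ∑ k ∈ range (n / 2 + 1),
        qbinom q (n - k) k * q ^ (k ^ 2) * (-1 : ℝ) ^ k * x ^ (n - 2 * k) /
          (qPoch (-q) q k * qPoch (-(q ^ (n + 1 - k))) q k) := calc
  qChebU q n x = ∑ k ∈ range (n + 1), qChebCoeff q k (n - k) * x ^ (n - k - k) :=
    Nat.sum_antidiagonal_eq_sum_range_succ (fun k m => qChebCoeff q k m * x ^ (m - k)) n
  _ = ∑ k ∈ range (n / 2 + 1), qChebCoeff q k (n - k) * x ^ (n - k - k) := by
    refine (sum_subset (range_subset_range.2 (by omega)) fun k _ hk => ?_).symm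
    rw [mem_range] at hk
    rw [qChebCoeff_of_lt (by omega), zero_mul]
  _ = _ := sum_congr rfl fun k hk => by
    rw [mem_range] at hk
    rw [qChebCoeff, qChoose_of_le (by omega), show n - k + 1 = n + 1 - k by omega,
      show n - k - k = n - 2 * k by omega]
    ring

theorem q_chebyshev_second_closed_form (q : ℝ) (hq0 : 0 < q) (hq1 : q < 1)
    (u : ℕ → ℝ → ℝ)
    (h0 : ∀ x, u 0 x = 1) (h1 : ∀ x, u 1 x = x)
    (hrec : ∀ n x, u (n + 2) x = x * u (n + 1) x -
      (q ^ (n + 1) / ((1 + q ^ (n + 1)) * (1 + q ^ (n + 2)))) * u n x) :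
    ∀ (n : ℕ) (x : ℝ),
      u n x = ∑ k ∈ Finset.range (n / 2 + 1),
        qbinom q (n - k) k * q ^ (k ^ 2) * (-1 : ℝ) ^ k * x ^ (n - 2 * k) /
          (qPoch (-q) q k * qPoch (-(q ^ (n + 1 - k))) q k) := by
  intro n x
  rw [← qChebU_eq_sum_range]
  induction n using Nat.twoStepInduction with
  | zero => rw [h0, qChebU_zero]
  | one => rw [h1, qChebU_one hq0.le hq1.ne]
  | more n ih ih' => rw [hrec, ih, ih', qChebU_succ_succ hq0.le hq1.ne]
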